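/- For every hypergraph H and every positive integer k, the following are equivalent: (1) H is a dually conformal Sperner hypergraph with dimension at most k; (2) there exists a finite simple graph G with vertex set V(H) satisfying τ_c^+(G) ≤ k such that the hyperedges of H are exactly the minimal clique transversals of G. -/

import Mathlib

open Finset
open scoped Classical

variable {V : Type*} [Fintype V] [DecidableEq V]

/-- A hypergraph on vertex set `V` is given by its finite set of hyperedges `E`;
the condition that every vertex belongs to at least one hyperedge. -/
def Covers (E : Finset (Finset V)) : Prop := ∀ v : V, ∃ e ∈ E, v ∈ e

/-- A hypergraph is Sperner if no hyperedge is contained in another hyperedge. -/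
def SpernerHG (E : Finset (Finset V)) : Prop := ∀ e ∈ E, ∀ f ∈ E, e ⊆ f → e = f

/-- A transversal of a hypergraph: a set of vertices intersecting all hyperedges. -/
def IsTransversal (E : Finset (Finset V)) (T : Finset V) : Prop := ∀ e ∈ E, (e ∩ T).Nonempty

/-- A minimal transversal: a transversal not properly containing another transversal. -/
def IsMinTransversal (E : Finset (Finset V)) (T : Finset V) : Prop :=
  IsTransversal E T ∧ ∀ T' ⊆ T, IsTransversal E T' → T' = T

/-- The dual hypergraph: its hyperedges are exactly the minimal transversals. -/
noncomputable def dualHG (E : Finset (Finset V)) : Finset (Finset V) :=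
  Finset.univ.filter fun T => IsMinTransversal E T

/-- The co-occurrence graph of a hypergraph: two distinct vertices are adjacent
iff some hyperedge contains both. -/
def coocGraph (E : Finset (Finset V)) : SimpleGraph V where
  Adj u v := u ≠ v ∧ ∃ e ∈ E, u ∈ e ∧ v ∈ e
  symm := by
    constructor
    rintro u v ⟨huv, e, he, hu, hv⟩
    exact ⟨Ne.symm huv, e, he, hv, hu⟩
  loopless := by
    constructor
    rintro v ⟨hv, -⟩
    exact hv rfl

/-- A maximal clique of a graph: a clique not properly contained in any other clique. -/
def IsMaxClique (G : SimpleGraph V) (C : Finset V) : Prop :=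
  G.IsClique (C : Set V) ∧ ∀ D : Finset V, G.IsClique (D : Set V) → C ⊆ D → D = C

/-- A hypergraph is conformal if every maximal clique of its co-occurrence graph
is a hyperedge. -/
def ConformalHG (E : Finset (Finset V)) : Prop :=
  ∀ C : Finset V, IsMaxClique (coocGraph E) C → C ∈ E

/-- A hypergraph is dually conformal if its dual hypergraph is conformal. -/
def DuallyConformalHG (E : Finset (Finset V)) : Prop :=
  ConformalHG (dualHG E)

/-- A clique transversal of a graph: a set of vertices meeting all maximal cliques. -/
def IsCliqueTransversal (G : SimpleGraph V) (X : Finset V) : Prop :=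
  ∀ C : Finset V, IsMaxClique G C → (C ∩ X).Nonempty

/-- A minimal clique transversal: a clique transversal not properly containing
another clique transversal. -/
def IsMinCliqueTransversal (G : SimpleGraph V) (X : Finset V) : Prop :=
  IsCliqueTransversal G X ∧ ∀ Y ⊆ X, IsCliqueTransversal G Y → Y = X

/-- The upper clique transversal number: the maximum size of a minimal clique
transversal. -/
noncomputable def uct (G : SimpleGraph V) : ℕ :=
  (Finset.univ.filter fun X : Finset V => IsMinCliqueTransversal G X).sup Finset.card

/-! `H` is recovered from its dual as `H = (H^d)^d` (Sperner hypergraphs are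
reflexive under duality), and a Sperner conformal hypergraph is recovered from its co-occurrence
graph as the hypergraph of its maximal cliques. So for the graph `G = G(H^d)` the minimal clique
transversals are the minimal transversals of `H^d`, i.e. the edges of `H`. Conversely, if the edges
of `H` are the minimal clique transversals of `G`, then `H^d` is the hypergraph of maximal cliques
of `G`, which is conformal because its co-occurrence graph is `G`. -/

section Transversal

variable {α : Type*} {E : Finset (Finset α)}

lemma IsTransversal.exists_isMinTransversal_subset [DecidableEq α] {T : Finset α}
    (hT : IsTransversal E T) : ∃ S ⊆ T, IsMinTransversal E S := by
  obtain ⟨S, hST, hS⟩ := exists_minimal_le_of_wellFoundedLT (IsTransversal E) T hT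
  exact ⟨S, hST, hS.1, fun _ hsub hT' => hS.eq_of_le hT' hsub⟩

variable [Fintype α] [DecidableEq α]

lemma mem_dualHG {T : Finset α} : T ∈ dualHG E ↔ IsMinTransversal E T := by
  simp [dualHG]

lemma sperner_dualHG (E : Finset (Finset α)) : SpernerHG (dualHG E) := by
  intro S hS T hT hST
  exact (mem_dualHG.mp hT).2 S hST (mem_dualHG.mp hS).1

lemma isTransversal_dualHG_of_mem {e : Finset α} (he : e ∈ E) : IsTransversal (dualHG E) e := by
  intro T hT
  rw [inter_comm]
  exact (mem_dualHG.mp hT).1 e he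

/-- Otherwise the complement of `X` would contain a minimal transversal of `E` missed by `X`. -/
lemma IsTransversal.exists_mem_subset_of_dualHG {X : Finset α}
    (hX : IsTransversal (dualHG E) X) : ∃ e ∈ E, e ⊆ X := by
  by_contra! hE
  have hcompl : IsTransversal E Xᶜ := by
    intro e he
    obtain ⟨v, hve, hvX⟩ := not_subset.mp (hE e he)
    exact ⟨v, mem_inter.mpr ⟨hve, mem_compl.mpr hvX⟩⟩
  obtain ⟨T, hTX, hT⟩ := hcompl.exists_isMinTransversal_subset
  obtain ⟨v, hv⟩ := hX T (mem_dualHG.mpr hT)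
  obtain ⟨hvT, hvX⟩ := mem_inter.mp hv
  exact mem_compl.mp (hTX hvT) hvX

lemma dualHG_dualHG (hE : SpernerHG E) : dualHG (dualHG E) = E := by
  ext X
  rw [mem_dualHG]
  constructor
  · rintro ⟨hX, hmin⟩
    obtain ⟨e, he, heX⟩ := hX.exists_mem_subset_of_dualHG
    exact hmin e heX (isTransversal_dualHG_of_mem he) ▸ he
  · intro hX
    refine ⟨isTransversal_dualHG_of_mem hX, fun Y hYX hY => ?_⟩
    obtain ⟨e, he, heY⟩ := hY.exists_mem_subset_of_dualHG
    have heX : e = X := hE e he X hX (heY.trans hYX)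
    exact hYX.antisymm (heX ▸ heY)

end Transversal

section MaxClique

variable {α : Type*}

lemma exists_isMaxClique_superset [Finite α] (G : SimpleGraph α) {C : Finset α}
    (hC : G.IsClique (C : Set α)) : ∃ D, C ⊆ D ∧ IsMaxClique G D := by
  obtain ⟨D, hCD, hD⟩ :=
    exists_maximal_ge_of_wellFoundedGT (fun D : Finset α => G.IsClique (D : Set α)) C hC
  exact ⟨D, hCD, hD.1, fun _ hD' hsub => (hD.eq_of_le hD' hsub).symm⟩

lemma isClique_coocGraph_of_mem {E : Finset (Finset α)} {e : Finset α} (he : e ∈ E) :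
    (coocGraph E).IsClique (e : Set α) :=
  fun _ hu _ hv huv => ⟨huv, e, he, hu, hv⟩

variable [Fintype α]

noncomputable def maxCliques (G : SimpleGraph α) : Finset (Finset α) :=
  univ.filter (IsMaxClique G)

variable {G : SimpleGraph α}

lemma mem_maxCliques {C : Finset α} : C ∈ maxCliques G ↔ IsMaxClique G C := by
  simp [maxCliques]

lemma sperner_maxCliques (G : SimpleGraph α) : SpernerHG (maxCliques G) := by
  intro C hC D hD hCD
  exact ((mem_maxCliques.mp hC).2 D (mem_maxCliques.mp hD).1 hCD).symm

lemma isMinCliqueTransversal_iff_mem_dualHG [DecidableEq α] {X : Finset α} :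
    IsMinCliqueTransversal G X ↔ X ∈ dualHG (maxCliques G) := by
  simp only [mem_dualHG, IsMinCliqueTransversal, IsMinTransversal, IsCliqueTransversal,
    IsTransversal, mem_maxCliques]

lemma uct_le_iff [DecidableEq α] {k : ℕ} :
    uct G ≤ k ↔ ∀ X, IsMinCliqueTransversal G X → X.card ≤ k := by
  simp [uct]

lemma coocGraph_maxCliques (G : SimpleGraph α) : coocGraph (maxCliques G) = G := by
  ext u v
  constructor
  · rintro ⟨huv, C, hC, hu, hv⟩
    exact (mem_maxCliques.mp hC).1 hu hv huv
  · intro huv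
    have hpair : G.IsClique (({u, v} : Finset α) : Set α) := by
      rw [coe_pair]
      exact SimpleGraph.isClique_pair.mpr fun _ => huv
    obtain ⟨D, hD, hDmax⟩ := exists_isMaxClique_superset G hpair
    exact ⟨huv.ne, D, mem_maxCliques.mpr hDmax, hD (by simp), hD (by simp)⟩

lemma conformalHG_maxCliques (G : SimpleGraph α) : ConformalHG (maxCliques G) := by
  intro C hC
  rw [coocGraph_maxCliques] at hC
  exact mem_maxCliques.mpr hC

lemma ConformalHG.maxCliques_coocGraph {F : Finset (Finset α)} (hC : ConformalHG F)
    (hS : SpernerHG F) : maxCliques (coocGraph F) = F := by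
  ext C
  rw [mem_maxCliques]
  refine ⟨hC C, fun hCF => ⟨isClique_coocGraph_of_mem hCF, fun D hD hCD => ?_⟩⟩
  obtain ⟨M, hDM, hM⟩ := exists_isMaxClique_superset _ hD
  have hCM : C = M := hS C hCF M (hC M hM) (hCD.trans hDM)
  exact (hCM ▸ hDM).antisymm hCD

end MaxClique

theorem dually_conformal_sperner_dim_iff_general (k : ℕ) (E : Finset (Finset V)) :
    (SpernerHG E ∧ DuallyConformalHG E ∧ ∀ e ∈ E, e.card ≤ k) ↔
      ∃ G : SimpleGraph V, uct G ≤ k ∧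
        ∀ X : Finset V, X ∈ E ↔ IsMinCliqueTransversal G X := by
  constructor
  · rintro ⟨hS, hDC, hdim⟩
    have hE : ∀ X, X ∈ E ↔ IsMinCliqueTransversal (coocGraph (dualHG E)) X := fun X => by
      rw [isMinCliqueTransversal_iff_mem_dualHG, hDC.maxCliques_coocGraph (sperner_dualHG E),
        dualHG_dualHG hS]
    exact ⟨coocGraph (dualHG E), uct_le_iff.mpr fun X hX => hdim X ((hE X).mpr hX), hE⟩
  · rintro ⟨G, huct, hE⟩
    have hEG : E = dualHG (maxCliques G) := by
      ext X
      rw [hE, isMinCliqueTransversal_iff_mem_dualHG]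
    refine ⟨hEG ▸ sperner_dualHG _, ?_, fun e he => uct_le_iff.mp huct e ((hE e).mp he)⟩
    rw [DuallyConformalHG, hEG, dualHG_dualHG (sperner_maxCliques G)]
    exact conformalHG_maxCliques G

/-- `H` is a dually conformal Sperner hypergraph of dimension at most `k`
iff there is a graph `G` on `V(H)` with `τ_c^+(G) ≤ k` whose minimal clique
transversals are exactly the hyperedges of `H`. -/
theorem dually_conformal_sperner_dim_iff [Nonempty V] (k : ℕ) (hk : 0 < k)
    (E : Finset (Finset V)) (hcov : Covers E) :
    (SpernerHG E ∧ DuallyConformalHG E ∧ ∀ e ∈ E, e.card ≤ k) ↔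
      ∃ G : SimpleGraph V, uct G ≤ k ∧
        ∀ X : Finset V, X ∈ E ↔ IsMinCliqueTransversal G X :=
  dually_conformal_sperner_dim_iff_general k E
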